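/- arXiv:1606.01939 — 9 statements merged into one kernel-verified Lean document; each statement's English description precedes it below -/
import Mathlib

section
/- If f : [0,∞) → [0,∞) is continuous with f(x) > x for x ∈ (0,K), f(x) < x for x > K, and |f(x) - K| ≤ M|x - K| for all x ≥ 0 with M ≥ 1, and α ∈ (1 - 1/M, 1), then for any x > 0 the map F_α(x) = αx + (1-α)f(x) satisfies |F_α(x) - K| ≤ |x - K|. -/
theorem stmt0 (f : ℝ → ℝ) (K M α : ℝ) (hK : 0 < K) (hM : 1 ≤ M)
    (hfc : ContinuousOn f (Set.Ici 0))
    (hfpos : ∀ x ∈ Set.Ici (0:ℝ), f x ∈ Set.Ici (0:ℝ))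
    (h1 : ∀ x, x ∈ Set.Ioo 0 K → f x > x)
    (h2 : ∀ x, x > K → f x < x)
    (hLip : ∀ x ≥ (0:ℝ), |f x - K| ≤ M * |x - K|)
    (hα : α ∈ Set.Ioo (1 - 1/M) 1) :
    ∀ x > (0:ℝ), |(α * x + (1 - α) * f x) - K| ≤ |x - K| := by
  obtain ⟨hα1, hα2⟩ := hα
  have hM0 : (0:ℝ) < M := lt_of_lt_of_le one_pos hM
  have h1α : 0 < 1 - α := by linarith
  have hαM : (1 - α) * M < 1 := by
    have h : 1 - α < 1/M := by linarith
    have h2' : (1-α)*M < (1/M)*M := mul_lt_mul_of_pos_right h hM0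
    have h3 : (1/M)*M = 1 := by field_simp
    linarith
  intro x hx
  have hfx := hLip x hx.le
  rcases lt_trichotomy x K with h | h | h
  · have hf := h1 x ⟨hx, h⟩
    rw [abs_of_nonpos (by linarith : x - K ≤ 0)] at hfx ⊢
    obtain ⟨hl, hu⟩ := abs_le.mp hfx
    rw [abs_le]
    constructor <;> nlinarith
  · have : |f x - K| ≤ 0 := by simpa [h] using hfx
    have hf : f x = K := by
      have := abs_nonneg (f x - K)
      have : |f x - K| = 0 := le_antisymm ‹_› ‹_›
      have := abs_eq_zero.mp this
      linarith
    subst h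
    rw [hf]
    have e : α * x + (1 - α) * x - x = 0 := by ring
    rw [e]
    simp
  · have hf := h2 x h
    rw [abs_of_nonneg (by linarith : 0 ≤ x - K)] at hfx ⊢
    obtain ⟨hl, hu⟩ := abs_le.mp hfx
    rw [abs_le]
    constructor <;> nlinarith
end

section
/- Let f : [0,∞) → [0,∞) be continuous, f(x) > x on (0,K), f(x) < x on (K,∞), and |f(x) - K| ≤ M|x - K| with M ≥ 1. Suppose x ∈ (0,K) and F_α(x) > K where α ∈ (1 - 1/M, 1) and F_α(x) = αx + (1-α)f(x). Then |F_α(x) - K| ≤ (1-α)|x - K|. -/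
theorem stmt1 (f : ℝ → ℝ) (K M α x : ℝ) (hK : 0 < K) (hM : 1 ≤ M)
    (hfc : ContinuousOn f (Set.Ici 0))
    (hfpos : ∀ y ∈ Set.Ici (0:ℝ), f y ∈ Set.Ici (0:ℝ))
    (h1 : ∀ y, y ∈ Set.Ioo 0 K → f y > y)
    (h2 : ∀ y, y > K → f y < y)
    (hLip : ∀ y ≥ (0:ℝ), |f y - K| ≤ M * |y - K|)
    (hα : α ∈ Set.Ioo (1 - 1/M) 1)
    (hx : x ∈ Set.Ioo 0 K)
    (hF : α * x + (1 - α) * f x > K) :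
    |(α * x + (1 - α) * f x) - K| ≤ (1 - α) * |x - K| := by
  obtain ⟨hx0, hxK⟩ := hx
  obtain ⟨hα1, hα2⟩ := hα
  have hM0 : (0:ℝ) < M := lt_of_lt_of_le one_pos hM
  have hlip := hLip x hx0.le
  rw [abs_of_neg (by linarith : x - K < 0)] at hlip
  have hfx : f x - K ≤ M * (K - x) := (le_abs_self _).trans (by linarith)
  rw [abs_of_pos (by linarith), abs_of_nonpos (by linarith)]
  have h1M : (1 - α) * M < 1 := by
    have h := mul_lt_mul_of_pos_right (show 1 - α < 1/M by linarith) hM0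
    rw [one_div, inv_mul_cancel₀ (ne_of_gt hM0)] at h
    exact h
  nlinarith [mul_pos (sub_pos.mpr hα2) (sub_pos.mpr hxK)]
end

section
/- Let f be as in Assumption 1 (continuous, f > x on (0,K), f < x on (K,∞), |f(x)-K| ≤ M|x-K|, M ≥ 1). Suppose x > K and F_α(x) < K for α ∈ (1 - 1/M, 1). Then |F_α(x) - K| ≤ (1-α)|x - K|. -/
theorem stmt2 (f : ℝ → ℝ) (K M α x : ℝ) (hK : 0 < K) (hM : 1 ≤ M)
    (hfc : ContinuousOn f (Set.Ici 0))
    (hfpos : ∀ y ∈ Set.Ici (0:ℝ), f y ∈ Set.Ici (0:ℝ))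
    (h1 : ∀ y, y ∈ Set.Ioo 0 K → f y > y)
    (h2 : ∀ y, y > K → f y < y)
    (hLip : ∀ y ≥ (0:ℝ), |f y - K| ≤ M * |y - K|)
    (hα : α ∈ Set.Ioo (1 - 1/M) 1)
    (hx : x > K)
    (hF : α * x + (1 - α) * f x < K) :
    |(α * x + (1 - α) * f x) - K| ≤ (1 - α) * |x - K| := by
  obtain ⟨hα1, hα2⟩ := hα
  have hM0 : (0:ℝ) < M := by linarith
  have hxK : x - K > 0 := by linarith
  have hx0 : x ≥ 0 := by linarith
  have hL := hLip x hx0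
  rw [abs_of_pos hxK] at hL
  have hfb : K - f x ≤ M * (x - K) := by
    have := neg_abs_le (f x - K)
    linarith
  rw [abs_of_neg (by linarith : α * x + (1 - α) * f x - K < 0), abs_of_pos hxK]
  have hαM : (1 - α) * M ≤ 1 := by
    have h : 1 - α < 1 / M := by linarith
    calc (1 - α) * M ≤ (1/M) * M := by nlinarith
    _ = 1 := by field_simp
  nlinarith [mul_le_mul_of_nonneg_left hfb (by linarith : (0:ℝ) ≤ 1 - α)]
end

section
/- Let f satisfy: continuous on [0,∞), f(x) > x on (0,K), f(x) < x on (K,∞), |f(x)-K| ≤ M|x-K| with M ≥ 1. Let (α_n) be a sequence with α_n ∈ [a, b] ⊂ (1 - 1/M, 1) for all n, and let x_{n+1} = α_n x_n + (1-α_n) f(x_n) with x_0 > 0. Then lim_{n→∞} x_n = K. -/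
lemma key_step (f : ℝ → ℝ) (K M a b αn y c : ℝ) (hb : b < 1)
    (hc : c = a*(1+M) - M) (hα1 : a ≤ αn) (hα2 : αn ≤ b)
    (h1 : 0 < y → y < K → y < f y) (h2 : K < y → f y < y)
    (hLip : |f y - K| ≤ M * |y - K|) (hy : 0 < y) :
    |(αn*y + (1-αn)*f y) - K| ≤
      max (|y-K| - (1-b)*|f y - y|) (|c| * |y-K|) := by
  rcases lt_trichotomy y K with hyK | hyK | hyK
  · have hfy : y < f y := h1 hy hyK
    have habs : |y - K| = K - y := by rw [abs_of_neg (by linarith)]; ring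
    have habs2 : |f y - y| = f y - y := abs_of_pos (by linarith)
    have hw : f y - K ≤ M * (K - y) := by
      have := (abs_le.mp hLip).2
      rw [habs] at this; linarith [le_abs_self (f y - K)]
    rw [abs_le]
    constructor
    · have h3 : -(|y-K| - (1-b)*|f y - y|) ≤ (αn*y + (1-αn)*f y) - K := by
        rw [habs, habs2]; nlinarith [hα2, hb]
      exact le_trans (by linarith [le_max_left (|y-K| - (1-b)*|f y - y|) (|c| * |y-K|)]) h3
    · have h4 : (αn*y + (1-αn)*f y) - K ≤ c * (y - K) := by
        rw [hc]; nlinarith [hα1]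
      have h5 : c * (y - K) ≤ |c| * |y - K| := by
        calc c * (y-K) ≤ |c * (y-K)| := le_abs_self _
        _ = |c| * |y-K| := abs_mul _ _
      exact le_trans (h4.trans h5) (le_max_right _ _)
  · subst hyK
    have : f y = y := by
      have : |f y - y| ≤ 0 := by simpa using hLip
      have := abs_nonpos_iff.mp this; linarith
    rw [this]
    have : αn * y + (1-αn)*y - y = 0 := by ring
    rw [this, abs_zero]
    refine le_trans ?_ (le_max_right _ _)
    positivity
  · have hfy : f y < y := h2 hyK
    have habs : |y - K| = y - K := abs_of_pos (by linarith)
    have habs2 : |f y - y| = y - f y := by rw [abs_of_neg (by linarith)]; ring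
    have hw : -(M * (y - K)) ≤ f y - K := by
      have := (abs_le.mp hLip).1
      rw [habs] at this; linarith
    rw [abs_le]
    constructor
    · have h4 : c * (y - K) ≤ (αn*y + (1-αn)*f y) - K := by
        rw [hc]; nlinarith [hα1]
      have h5 : -(|c| * |y-K|) ≤ c * (y - K) := by
        rw [← abs_neg c]
        calc -(|(-c)| * |y-K|) = -(|(-c) * (y-K)|) := by rw [abs_mul]
        _ ≤ -((-c) * (y-K)) := by have := le_abs_self ((-c)*(y-K)); linarith
        _ = c * (y-K) := by ring
      exact le_trans (by linarith [le_max_right (|y-K| - (1-b)*|f y - y|) (|c| * |y-K|)]) (h5.trans h4)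
    · have h3 : (αn*y + (1-αn)*f y) - K ≤ |y-K| - (1-b)*|f y - y| := by
        rw [habs, habs2]; nlinarith [hα2, hb]
      exact h3.trans (le_max_left _ _)

theorem stmt3 (f : ℝ → ℝ) (K M a b : ℝ) (α : ℕ → ℝ) (x : ℕ → ℝ)
    (hK : 0 < K) (hM : 1 ≤ M)
    (hfc : ContinuousOn f (Set.Ici 0))
    (hfpos : ∀ y ∈ Set.Ici (0:ℝ), f y ∈ Set.Ici (0:ℝ))
    (h1 : ∀ y, y ∈ Set.Ioo 0 K → f y > y)
    (h2 : ∀ y, y > K → f y < y)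
    (hLip : ∀ y ≥ (0:ℝ), |f y - K| ≤ M * |y - K|)
    (ha : 1 - 1/M < a) (hb : b < 1) (hab : a ≤ b)
    (hα : ∀ n, α n ∈ Set.Icc a b)
    (hx0 : x 0 > 0)
    (hrec : ∀ n, x (n+1) = α n * x n + (1 - α n) * f (x n)) :
    Filter.Tendsto x Filter.atTop (nhds K) := by
  have hMpos : (0:ℝ) < M := by linarith
  have hinv : 1/M ≤ 1 := by rw [div_le_one hMpos]; exact hM
  have hapos : 0 < a := by linarith
  set c : ℝ := a*(1+M) - M with hc
  have hc1 : -1 < c := by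
    have h1M : (1:ℝ) + M > 0 := by linarith
    have : (1 - 1/M) * (1+M) < a * (1+M) := by
      exact mul_lt_mul_of_pos_right ha h1M
    have hexp : (1 - 1/M) * (1+M) = 1 + M - 1/M - (1/M)*M := by ring
    have hMM : (1/M)*M = 1 := by field_simp
    rw [hexp, hMM] at this
    have : M - 1/M < a * (1+M) := by linarith
    simp only [hc]; linarith
  have hc2 : c < 1 := by
    have : a < 1 := lt_of_le_of_lt hab hb
    have h1M : (0:ℝ) < 1 + M := by linarith
    nlinarith
  have hcabs : |c| < 1 := abs_lt.mpr ⟨hc1, hc2⟩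
  -- positivity of the orbit
  have hxpos : ∀ n, 0 < x n := by
    intro n
    induction n with
    | zero => exact hx0
    | succ n ih =>
      have hαn := hα n
      have hfn : 0 ≤ f (x n) := hfpos (x n) (le_of_lt ih)
      rw [hrec n]
      have h1' : 0 < α n * x n := mul_pos (lt_of_lt_of_le hapos hαn.1) ih
      have h2' : 0 ≤ (1 - α n) * f (x n) := mul_nonneg (by linarith [hαn.2]) hfn
      linarith
  set e : ℕ → ℝ := fun n => |x n - K| with he
  have hstep : ∀ n, e (n+1) ≤ max (e n - (1-b)*|f (x n) - x n|) (|c| * e n) := by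
    intro n
    have hαn := hα n
    have := key_step f K M a b (α n) (x n) c hb hc hαn.1 hαn.2
      (fun h h' => h1 (x n) ⟨h, h'⟩) (h2 (x n)) (hLip (x n) (le_of_lt (hxpos n))) (hxpos n)
    simpa [he, hrec n] using this
  have hanti : Antitone e := by
    refine antitone_nat_of_succ_le (fun n => ?_)
    refine (hstep n).trans (max_le ?_ ?_)
    · have : (0:ℝ) ≤ (1-b)*|f (x n) - x n| := by
        apply mul_nonneg (by linarith) (abs_nonneg _)
      linarith
    · exact mul_le_of_le_one_left (abs_nonneg _) hcabs.le
  have hbdd : BddBelow (Set.range e) := ⟨0, fun y ⟨n, hn⟩ => hn ▸ abs_nonneg _⟩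
  set L : ℝ := ⨅ n, e n with hL
  have hLtend : Filter.Tendsto e Filter.atTop (nhds L) := tendsto_atTop_ciInf hanti hbdd
  have hLle : ∀ n, L ≤ e n := fun n => ciInf_le hbdd n
  have hL0 : 0 ≤ L := le_ciInf (fun n => abs_nonneg _)
  rcases eq_or_lt_of_le hL0 with hLzero | hLpos
  · -- L = 0 : done
    rw [show (nhds K) = nhds K from rfl]
    have : Filter.Tendsto e Filter.atTop (nhds 0) := by rwa [← hLzero] at hLtend
    rw [tendsto_iff_norm_sub_tendsto_zero]
    simpa [he, Real.norm_eq_abs] using this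
  · exfalso
    -- extract convergent subsequence
    have hub : ∀ n, x n ∈ Set.Icc (0:ℝ) (K + e 0) := by
      intro n
      refine ⟨le_of_lt (hxpos n), ?_⟩
      have h1' : e n ≤ e 0 := hanti (Nat.zero_le n)
      have h2' : x n - K ≤ e n := le_abs_self _
      linarith
    obtain ⟨p, hp, φ, hφ, hconv⟩ := (isCompact_Icc).tendsto_subseq hub
    have hφt : Filter.Tendsto φ Filter.atTop Filter.atTop := hφ.tendsto_atTop
    have heconv : Filter.Tendsto (fun k => e (φ k)) Filter.atTop (nhds L) :=
      hLtend.comp hφt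
    have hpK : |p - K| = L := by
      have h1' : Filter.Tendsto (fun k => |x (φ k) - K|) Filter.atTop (nhds (|p - K|)) :=
        ((hconv.sub tendsto_const_nhds).abs)
      exact tendsto_nhds_unique h1' heconv
    have hppos : 0 < p := by
      by_contra hneg
      push_neg at hneg
      have hLK : L = K - p := by
        rw [← hpK, abs_of_nonpos (by linarith)]; ring
      have hLgeK : K ≤ L := by linarith
      -- then every x n ≥ K + L
      have hxbig : ∀ n, K + L ≤ x n := by
        intro n
        rcases le_or_gt (x n) K with hcase | hcase
        · exfalso
          have hen : e n = K - x n := by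
            simp only [he]; rw [abs_of_nonpos (by linarith)]; ring
          have hl := hLle n
          rw [hen] at hl
          linarith [hxpos n, hLgeK]
        · have hen : e n = x n - K := by
            simp only [he]; rw [abs_of_pos (by linarith)]
          have hl := hLle n
          rw [hen] at hl
          linarith
      have hple : K + L ≤ p :=
        le_of_tendsto_of_tendsto tendsto_const_nhds hconv
          (Filter.Eventually.of_forall (fun k => hxbig (φ k)))
      linarith
    -- f p = p via limit of step inequality
    have hp0 : p ∈ Set.Ici (0:ℝ) := le_of_lt hppos
    have hfcont : Filter.Tendsto (fun k => f (x (φ k))) Filter.atTop (nhds (f p)) := by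
      have hcw : ContinuousWithinAt f (Set.Ici 0) p := hfc p hp0
      apply hcw.tendsto.comp
      rw [tendsto_nhdsWithin_iff]
      exact ⟨hconv, Filter.Eventually.of_forall (fun k => le_of_lt (hxpos (φ k)))⟩
    have hRHS : Filter.Tendsto
        (fun k => max (e (φ k) - (1-b)*|f (x (φ k)) - x (φ k)|) (|c| * e (φ k)))
        Filter.atTop (nhds (max (L - (1-b)*|f p - p|) (|c| * L))) := by
      apply Filter.Tendsto.max
      · exact heconv.sub ((tendsto_const_nhds.mul ((hfcont.sub hconv).abs)))
      · exact tendsto_const_nhds.mul heconv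
    have hLle2 : L ≤ max (L - (1-b)*|f p - p|) (|c| * L) := by
      refine ge_of_tendsto hRHS (Filter.Eventually.of_forall (fun k => ?_))
      exact (hLle (φ k + 1)).trans (hstep (φ k))
    have hcL : |c| * L < L := by nlinarith [abs_nonneg c]
    have hfp : f p = p := by
      rcases max_cases (L - (1-b)*|f p - p|) (|c| * L) with ⟨hmax, _⟩ | ⟨hmax, _⟩
      · rw [hmax] at hLle2
        have h1' : (1-b)*|f p - p| ≤ 0 := by linarith
        have h2' : 0 ≤ |f p - p| := abs_nonneg _
        have h3' : (0:ℝ) < 1 - b := by linarith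
        have : |f p - p| = 0 := by nlinarith
        have := abs_eq_zero.mp this
        linarith
      · rw [hmax] at hLle2; linarith
    have hpne : p ≠ K := by
      intro h
      rw [h] at hpK
      simp at hpK
      linarith
    rcases lt_or_gt_of_ne hpne with hlt | hgt
    · have := h1 p ⟨hppos, hlt⟩; linarith [hfp]
    · have := h2 p hgt; linarith [hfp]
end

section
/- Under the hypotheses of the variable-control PBC (f continuous, f > x on (0,K), f < x on (K,∞), |f(x)-K| ≤ M|x-K|, M ≥ 1, α_n ∈ [a,1) with a > 1 - 1/M), the sequence (|x_n - K|) for x_{n+1} = α_n x_n + (1-α_n) f(x_n), x_0 > 0, is non-increasing. -/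
theorem stmt4 (f : ℝ → ℝ) (K M a : ℝ) (α : ℕ → ℝ) (x : ℕ → ℝ)
    (hK : 0 < K) (hM : 1 ≤ M)
    (hfc : ContinuousOn f (Set.Ici 0))
    (hfpos : ∀ y ∈ Set.Ici (0:ℝ), f y ∈ Set.Ici (0:ℝ))
    (h1 : ∀ y, y ∈ Set.Ioo 0 K → f y > y)
    (h2 : ∀ y, y > K → f y < y)
    (hLip : ∀ y ≥ (0:ℝ), |f y - K| ≤ M * |y - K|)
    (ha : 1 - 1/M < a)
    (hα : ∀ n, α n ∈ Set.Ico a 1)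
    (hx0 : x 0 > 0)
    (hrec : ∀ n, x (n+1) = α n * x n + (1 - α n) * f (x n)) :
    Antitone (fun n => |x n - K|) := by
  have hM0 : (0:ℝ) < M := lt_of_lt_of_le one_pos hM
  have ha0 : 0 < a := by
    have h : (0:ℝ) ≤ 1 - 1/M := by
      rw [sub_nonneg, div_le_one hM0]; exact hM
    linarith
  have hpos : ∀ n, 0 < x n := by
    intro n; induction n with
    | zero => exact hx0
    | succ n ih =>
      have hαn := hα n
      have hf := hfpos (x n) (le_of_lt ih)
      have h1' : 0 < α n := lt_of_lt_of_le ha0 hαn.1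
      have h2' : 0 ≤ 1 - α n := by linarith [hαn.2]
      rw [hrec n]
      simp only [Set.mem_Ici] at hf
      nlinarith
  apply antitone_nat_of_succ_le
  intro n
  show |x (n+1) - K| ≤ |x n - K|
  have hαn := hα n
  have hα0 : 0 < α n := lt_of_lt_of_le ha0 hαn.1
  have hα1 : α n < 1 := hαn.2
  have hxn := hpos n
  have hLn := hLip (x n) hxn.le
  have hαM : (1 - α n) * M < 1 := by
    have h1a : (1 - a) * M < 1 := (lt_div_iff₀ hM0).mp (by linarith)
    nlinarith [hαn.1]
  rcases lt_trichotomy (x n) K with hlt | heq | hgt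
  · have hf1 := h1 (x n) ⟨hxn, hlt⟩
    have habs : |x n - K| = K - x n := by rw [abs_of_neg (by linarith)]; ring
    rw [habs] at hLn ⊢
    obtain ⟨hl, hr⟩ := abs_le.mp hLn
    rw [hrec n]
    rw [abs_le]
    constructor <;> nlinarith
  · have hfK : f (x n) = K := by
      rw [heq] at hLn
      simp at hLn
      have := abs_nonneg (f (x n) - K)
      have h0 : |f (x n) - K| = 0 := le_antisymm (by simpa [heq] using hLn) this
      have := abs_eq_zero.mp h0
      linarith
    rw [hrec n, hfK, heq]
    have : α n * K + (1 - α n) * K - K = 0 := by ring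
    rw [this, abs_zero]
    exact abs_nonneg _
  · have hf2 := h2 (x n) hgt
    have habs : |x n - K| = x n - K := abs_of_pos (by linarith)
    rw [habs] at hLn ⊢
    obtain ⟨hl, hr⟩ := abs_le.mp hLn
    rw [hrec n]
    rw [abs_le]
    constructor <;> nlinarith
end

section
/- Suppose f additionally is monotone decreasing on [c,∞) for some c < K, and α_n ∈ [a,b] ⊂ (1 - 1/M, 1). Then for any solution of x_{n+1} = α_n x_n + (1-α_n) f(x_n) with x_0 > 0, there exists n_0 such that x_n ≥ c for n ≥ n_0 and |x_{n+1} - K| ≤ γ |x_n - K| for n ≥ n_0, where γ = max{b, 1-a} < 1. -/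
set_option maxHeartbeats 1600000 in
theorem stmt5 (f : ℝ → ℝ) (K M a b c : ℝ) (α : ℕ → ℝ) (x : ℕ → ℝ)
    (hK : 0 < K) (hM : 1 ≤ M) (hc : c < K)
    (hfc : ContinuousOn f (Set.Ici 0))
    (hfpos : ∀ y ∈ Set.Ici (0:ℝ), f y ∈ Set.Ici (0:ℝ))
    (h1 : ∀ y, y ∈ Set.Ioo 0 K → f y > y)
    (h2 : ∀ y, y > K → f y < y)
    (hLip : ∀ y ≥ (0:ℝ), |f y - K| ≤ M * |y - K|)
    (hdec : AntitoneOn f (Set.Ici c))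
    (ha : 1 - 1/M < a) (hb : b < 1) (hab : a ≤ b)
    (hα : ∀ n, α n ∈ Set.Icc a b)
    (hx0 : x 0 > 0)
    (hrec : ∀ n, x (n+1) = α n * x n + (1 - α n) * f (x n)) :
    max b (1 - a) < 1 ∧
    ∃ n0 : ℕ, ∀ n ≥ n0, x n ≥ c ∧ |x (n+1) - K| ≤ max b (1 - a) * |x n - K| := by
  have hM0 : (0:ℝ) < M := lt_of_lt_of_le one_pos hM
  have ha0 : 0 < a := by
    have : 1/M ≤ 1 := by rw [div_le_one hM0]; exact hM
    linarith
  have haM : (1 - a) * M < 1 := by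
    have h' : 1 - a < 1/M := by linarith
    calc (1 - a) * M < (1/M) * M := by
          apply mul_lt_mul_of_pos_right h' hM0
      _ = 1 := by field_simp
  set γ : ℝ := max b (1 - a) with hγdef
  have hγb : b ≤ γ := le_max_left _ _
  have hγa : 1 - a ≤ γ := le_max_right _ _
  have ha1 : a < 1 := lt_of_le_of_lt hab hb
  have hγ1 : γ < 1 := max_lt hb (by linarith)
  have hγ0 : 0 < γ := lt_of_lt_of_le (by linarith) hγa
  have fK : f K = K := by
    have h' := hLip K hK.le
    rw [sub_self, abs_zero, mul_zero] at h'
    have h'' : |f K - K| = 0 := le_antisymm h' (abs_nonneg _)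
    rw [abs_eq_zero] at h''
    linarith
  have xpos : ∀ n, 0 < x n := by
    intro n
    induction n with
    | zero => exact hx0
    | succ n ih =>
      rw [hrec]
      have hf := hfpos (x n) (le_of_lt ih)
      rw [Set.mem_Ici] at hf
      have hαn := hα n
      nlinarith [hαn.1, hαn.2]
  -- contraction once x n ≥ c
  have hcontr : ∀ n, c ≤ x n → |x (n+1) - K| ≤ γ * |x n - K| := by
    intro n hcx
    have hxn := xpos n
    have hαn := hα n
    have hαa := hαn.1
    have hαb := hαn.2
    have hf := hLip (x n) hxn.le
    have hfb := abs_le.1 hf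
    have h1αM : (1 - α n) * M < 1 := by
      calc (1 - α n) * M ≤ (1 - a) * M := by
            apply mul_le_mul_of_nonneg_right (by linarith) hM0.le
        _ < 1 := haM
    rw [hrec]
    rcases le_or_gt K (x n) with hK' | hK'
    · -- x n ≥ K ; f (x n) ≤ K
      have hfle : f (x n) ≤ K := by
        have h' := hdec (Set.mem_Ici.2 hc.le) (Set.mem_Ici.2 hcx) hK'
        rwa [fK] at h'
      rw [abs_of_nonneg (by linarith : (0:ℝ) ≤ x n - K)] at hfb ⊢
      rw [abs_le]
      constructor
      · nlinarith [mul_nonneg (by linarith : (0:ℝ) ≤ 1 - α n) (by linarith : (0:ℝ) ≤ x n - K),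
          mul_le_mul_of_nonneg_right h1αM.le (by linarith : (0:ℝ) ≤ x n - K)]
      · nlinarith [mul_nonpos_of_nonneg_of_nonpos (by linarith : (0:ℝ) ≤ 1 - α n)
          (by linarith : f (x n) - K ≤ 0)]
    · -- c ≤ x n < K ; f (x n) ≥ K
      have hfge : K ≤ f (x n) := by
        have h' := hdec (Set.mem_Ici.2 hcx) (Set.mem_Ici.2 hc.le) hK'.le
        rwa [fK] at h'
      rw [abs_of_nonpos (by linarith : x n - K ≤ 0)] at hfb ⊢
      rw [abs_le]
      constructor
      · nlinarith [mul_nonneg (by linarith : (0:ℝ) ≤ 1 - α n) (by linarith : (0:ℝ) ≤ f (x n) - K)]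
      · nlinarith [mul_le_mul_of_nonneg_right h1αM.le (by linarith : (0:ℝ) ≤ K - x n)]
  -- below K: increasing and nonexpansive
  have hne : ∀ n, x n < K → x n < x (n+1) ∧ |x (n+1) - K| ≤ |x n - K| := by
    intro n hxK
    have hxn := xpos n
    have hαn := hα n
    have hαa := hαn.1
    have hαb := hαn.2
    have hfgt : f (x n) > x n := h1 (x n) ⟨hxn, hxK⟩
    have hf := hLip (x n) hxn.le
    rw [abs_of_nonpos (by linarith : x n - K ≤ 0)] at hf
    have hfb := abs_le.1 hf
    have h1αM : (1 - α n) * M < 1 := by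
      calc (1 - α n) * M ≤ (1 - a) * M := by
            apply mul_le_mul_of_nonneg_right (by linarith) hM0.le
        _ < 1 := haM
    constructor
    · rw [hrec]
      linarith [mul_pos (by linarith : (0:ℝ) < 1 - α n) (by linarith : (0:ℝ) < f (x n) - x n)]
    · rw [hrec]
      rw [abs_of_nonpos (by linarith : x n - K ≤ 0), abs_le]
      constructor
      · linarith [mul_lt_mul_of_pos_left hfgt (by linarith : (0:ℝ) < 1 - α n)]
      · linarith [mul_le_mul_of_nonneg_left hfb.2 (by linarith : (0:ℝ) ≤ 1 - α n),
          mul_le_mul_of_nonneg_right h1αM.le (by linarith : (0:ℝ) ≤ K - x n),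
          mul_nonneg (by linarith : (0:ℝ) ≤ α n) (by linarith : (0:ℝ) ≤ K - x n)]
  -- distance non-increasing step
  have hstep : ∀ n, |x (n+1) - K| ≤ |x n - K| := by
    intro n
    rcases lt_or_ge (x n) K with h' | h'
    · exact (hne n h').2
    · calc |x (n+1) - K| ≤ γ * |x n - K| := hcontr n (by linarith)
        _ ≤ 1 * |x n - K| := mul_le_mul_of_nonneg_right hγ1.le (abs_nonneg _)
        _ = |x n - K| := one_mul _
  have Dmono : ∀ m n, m ≤ n → |x n - K| ≤ |x m - K| := by
    intro m n hmn
    induction n, hmn using Nat.le_induction with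
    | base => exact le_refl _
    | succ n hmn ih => exact le_trans (hstep n) ih
  refine ⟨hγ1, ?_⟩
  rcases le_or_gt c 0 with hc0 | hc0
  · -- trivial case: x n ≥ c always
    exact ⟨0, fun n _ => ⟨le_trans hc0 (xpos n).le, hcontr n (le_trans hc0 (xpos n).le)⟩⟩
  -- c > 0 : find m with |x m - K| ≤ K - c
  have hm : ∃ m, |x m - K| ≤ K - c := by
    by_contra hH
    push_neg at hH
    by_cases hcase : ∃ N, ∀ n ≥ N, x n < K
    · obtain ⟨N, hN⟩ := hcase
      have hlt : ∀ n ≥ N, x n < c := by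
        intro n hn
        have h1' := hN n hn
        have h2' := hH n
        rw [abs_of_nonpos (by linarith)] at h2'
        linarith
      have hinc : ∀ n ≥ N, x N ≤ x n := by
        intro n hn
        induction n, hn using Nat.le_induction with
        | base => exact le_refl _
        | succ n hn ih => exact le_trans ih (hne n (hN n hn)).1.le
      set S := Set.Icc (x N) c with hSdef
      have hSsub : S ⊆ Set.Ici (0:ℝ) := fun y hy => le_trans (xpos N).le hy.1
      have hcont : ContinuousOn (fun y => f y - y) S :=
        ContinuousOn.sub (hfc.mono hSsub) continuousOn_id
      have hSne : S.Nonempty := ⟨x N, le_refl _, (hlt N (le_refl N)).le⟩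
      obtain ⟨y0, hy0S, hy0min⟩ := isCompact_Icc.exists_isMinOn hSne hcont
      have hy0pos : 0 < y0 := lt_of_lt_of_le (xpos N) hy0S.1
      have hy0K : y0 < K := lt_of_le_of_lt hy0S.2 hc
      set δ : ℝ := f y0 - y0 with hδdef
      have hδ : 0 < δ := by
        have := h1 y0 ⟨hy0pos, hy0K⟩
        simp only [hδdef]
        linarith
      have hgrow : ∀ k : ℕ, x N + k * ((1 - b) * δ) ≤ x (N + k) := by
        intro k
        induction k with
        | zero => simp
        | succ k ih =>
          have hmem : x (N + k) ∈ S :=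
            ⟨hinc (N + k) (Nat.le_add_right _ _), (hlt (N + k) (Nat.le_add_right _ _)).le⟩
          have hmin := hy0min hmem
          simp only [Set.mem_setOf_eq] at hmin
          have hαn := hα (N + k)
          have hrun := hrec (N + k)
          have hfx : δ ≤ f (x (N + k)) - x (N + k) := hmin
          have hstep2 : x (N + k) + (1 - b) * δ ≤ x (N + k + 1) := by
            rw [hrun]
            nlinarith [hαn.1, hαn.2, mul_le_mul_of_nonneg_left hfx
              (by linarith [hαn.2] : (0:ℝ) ≤ 1 - α (N + k))]
          have : (N + (k + 1)) = (N + k) + 1 := by ring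
          rw [this]
          push_cast
          push_cast at ih
          nlinarith
      obtain ⟨k, hk⟩ := exists_nat_gt ((c - x N) / ((1 - b) * δ))
      have hε : (0:ℝ) < (1 - b) * δ := mul_pos (by linarith) hδ
      have hk' : c - x N < k * ((1 - b) * δ) := by
        rw [div_lt_iff₀ hε] at hk
        exact hk
      have := hgrow k
      have := hlt (N + k) (Nat.le_add_right _ _)
      linarith
    · push_neg at hcase
      have hiter : ∀ i : ℕ, ∃ m, |x m - K| ≤ γ ^ i * |x 0 - K| := by
        intro i
        induction i with
        | zero => exact ⟨0, by simp⟩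
        | succ i ih =>
          obtain ⟨m, hmle⟩ := ih
          obtain ⟨n, hn, hKx⟩ := hcase m
          refine ⟨n + 1, ?_⟩
          calc |x (n+1) - K| ≤ γ * |x n - K| := hcontr n (by linarith)
            _ ≤ γ * |x m - K| := mul_le_mul_of_nonneg_left (Dmono m n hn) hγ0.le
            _ ≤ γ * (γ ^ i * |x 0 - K|) := mul_le_mul_of_nonneg_left hmle hγ0.le
            _ = γ ^ (i + 1) * |x 0 - K| := by ring
      have hKc : (0:ℝ) < K - c := by linarith
      rcases eq_or_lt_of_le (abs_nonneg (x 0 - K)) with h0 | h0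
      · have := hH 0
        rw [← h0] at this
        linarith
      · obtain ⟨i, hi⟩ := exists_pow_lt_of_lt_one (div_pos hKc h0) hγ1
        obtain ⟨m, hmle⟩ := hiter i
        have : γ ^ i * |x 0 - K| < K - c := by
          rw [div_eq_mul_inv] at hi
          calc γ ^ i * |x 0 - K| < (K - c) * |x 0 - K|⁻¹ * |x 0 - K| := by
                apply mul_lt_mul_of_pos_right hi h0
            _ = K - c := by field_simp
        have := hH m
        linarith
  obtain ⟨m, hm⟩ := hm
  have hprop : ∀ n ≥ m, |x n - K| ≤ K - c := by
    intro n hn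
    induction n, hn using Nat.le_induction with
    | base => exact hm
    | succ n hn ih =>
      have hxc : c ≤ x n := by
        have := abs_le.1 ih
        linarith [this.1]
      calc |x (n+1) - K| ≤ γ * |x n - K| := hcontr n hxc
        _ ≤ 1 * (K - c) := by
            apply mul_le_mul hγ1.le ih (abs_nonneg _) (by norm_num)
        _ = K - c := one_mul _
  refine ⟨m, fun n hn => ?_⟩
  have hxc : c ≤ x n := by
    have := abs_le.1 (hprop n hn)
    linarith [this.1]
  exact ⟨hxc, hcontr n hxc⟩
end

section
/- With μ₁ = f(μ₂), μ₂ = max f as above, for any α ∈ [0,1] the map F_α(x) = αx + (1-α)f(x) maps [μ₁, μ₂] into [μ₁, μ₂]. -/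
theorem stmt8 (f : ℝ → ℝ) (K c μ₁ μ₂ α : ℝ) (hK : 0 < K) (hc : c < K)
    (hfc : ContinuousOn f (Set.Ici 0))
    (hfpos : ∀ y ∈ Set.Ici (0:ℝ), f y ∈ Set.Ici (0:ℝ))
    (h1 : ∀ y, y ∈ Set.Ioo 0 K → f y > y)
    (h2 : ∀ y, y > K → f y < y)
    (hdec : AntitoneOn f (Set.Ici c))
    (hmax : ∀ s ≥ (0:ℝ), f s ≤ μ₂)
    (hatt : ∃ x ∈ Set.Icc (0:ℝ) c, f x = μ₂)
    (hμ₁ : μ₁ = f μ₂)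
    (hα : α ∈ Set.Icc (0:ℝ) 1) :
    Set.MapsTo (fun x => α * x + (1 - α) * f x) (Set.Icc μ₁ μ₂) (Set.Icc μ₁ μ₂) := by
  have hμ₂K : K ≤ μ₂ := by
    by_contra h
    push_neg at h
    rcases le_or_gt μ₂ 0 with h0 | h0
    · have := h1 (K/2) ⟨by linarith, by linarith⟩
      have := hmax (K/2) (by linarith)
      linarith
    · have := h1 μ₂ ⟨h0, h⟩
      have := hmax μ₂ (by linarith)
      linarith
  have hμ₂0 : (0:ℝ) ≤ μ₂ := by linarith
  have hμ₁0 : (0:ℝ) ≤ μ₁ := by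
    rw [hμ₁]; exact hfpos μ₂ hμ₂0
  intro x hx
  obtain ⟨hx1, hx2⟩ := hx
  have hx0 : (0:ℝ) ≤ x := le_trans hμ₁0 hx1
  have hfxle : f x ≤ μ₂ := hmax x hx0
  have hfxge : μ₁ ≤ f x := by
    rcases le_or_gt c x with hcx | hcx
    · have := hdec (Set.mem_Ici.mpr hcx) (Set.mem_Ici.mpr (by linarith)) hx2
      linarith [hμ₁ ▸ this]
    · rcases eq_or_lt_of_le hx0 with h0 | h0
      · have : μ₁ ≤ (0:ℝ) := h0 ▸ hx1
        have := hfpos x hx0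
        simp only [Set.mem_Ici] at this
        linarith
      · have := h1 x ⟨h0, by linarith⟩
        linarith
  obtain ⟨hα0, hα1⟩ := hα
  constructor
  · show μ₁ ≤ α * x + (1 - α) * f x
    nlinarith
  · show α * x + (1 - α) * f x ≤ μ₂
    nlinarith
end

section
/- Let f satisfy |f(x)-K| ≤ M|x-K| (M ≥ 1, f continuous, f > x on (0,K), f < x on (K,∞)). Let (ξ_n) be random variables with values in [-1,1], α ∈ (1 - 1/M, 1), and l < min{α - (1 - 1/M), 1 - α}. Then for every sample path ω, the solution of x_{n+1} = max{f(x_n) - (α + l ξ_{n+1}(ω))(f(x_n) - x_n), 0} with x_0 > 0 converges to K. -/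
open Filter Set Topology

set_option maxHeartbeats 1000000

theorem stmt11 {Ω : Type*} (f : ℝ → ℝ) (K M α l : ℝ) (ξ : ℕ → Ω → ℝ)
    (x : Ω → ℕ → ℝ)
    (hK : 0 < K) (hM : 1 ≤ M)
    (hfc : ContinuousOn f (Set.Ici 0))
    (hfpos : ∀ y ∈ Set.Ici (0:ℝ), f y ∈ Set.Ici (0:ℝ))
    (h1 : ∀ y, y ∈ Set.Ioo 0 K → f y > y)
    (h2 : ∀ y, y > K → f y < y)
    (hLip : ∀ y ≥ (0:ℝ), |f y - K| ≤ M * |y - K|)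
    (hα : α ∈ Set.Ioo (1 - 1/M) 1)
    (hl : 0 < l) (hl' : l < min (α - (1 - 1/M)) (1 - α))
    (hξ : ∀ n ω, ξ n ω ∈ Set.Icc (-1 : ℝ) 1)
    (hx0 : ∀ ω, x ω 0 > 0)
    (hrec : ∀ ω n, x ω (n+1) =
      max (f (x ω n) - (α + l * ξ (n+1) ω) * (f (x ω n) - x ω n)) 0) :
    ∀ ω, Filter.Tendsto (x ω) Filter.atTop (nhds K) := by
  have hM0 : (0:ℝ) < M := lt_of_lt_of_le one_pos hM
  obtain ⟨hα1, hα2⟩ := hα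
  have hl1 : l < α - (1 - 1/M) := lt_of_lt_of_le hl' (min_le_left _ _)
  have hl2 : l < 1 - α := lt_of_lt_of_le hl' (min_le_right _ _)
  set β : ℝ := α - l with hβdef
  set γ : ℝ := α + l with hγdef
  have hβlb : 1 - 1/M < β := by simp only [hβdef]; linarith
  have hβ0 : 0 < β := by
    have : 1/M ≤ 1 := by
      rw [div_le_one hM0]; exact hM
    linarith
  have hγ1 : γ < 1 := by simp only [hγdef]; linarith
  have hβγ : β ≤ γ := by simp only [hβdef, hγdef]; linarith
  set q : ℝ := (1 - β) * M with hqdef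
  have hq1 : q < 1 := by
    have h1M : 1 - β < 1/M := by linarith
    have : (1 - β) * M < (1/M) * M := by
      apply mul_lt_mul_of_pos_right h1M hM0
    rwa [one_div_mul_cancel (ne_of_gt hM0)] at this
  have hq0 : 0 ≤ q := by
    apply mul_nonneg _ (le_of_lt hM0)
    linarith
  -- f K = K
  have hcK : ContinuousAt f K := by
    have := hfc K (le_of_lt hK)
    exact this.continuousAt (Ici_mem_nhds hK)
  have hfK : f K = K := by
    have hge : K ≤ f K := by
      have htf : Tendsto f (nhdsWithin K (Ioo 0 K)) (nhds (f K)) :=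
        hcK.tendsto.mono_left nhdsWithin_le_nhds
      have hti : Tendsto (fun y : ℝ => y) (nhdsWithin K (Ioo 0 K)) (nhds K) :=
        tendsto_id.mono_left nhdsWithin_le_nhds
      have hne : (nhdsWithin K (Ioo 0 K)).NeBot := by
        apply mem_closure_iff_nhdsWithin_neBot.mp
        rw [closure_Ioo (ne_of_lt hK)]
        exact ⟨le_of_lt hK, le_refl K⟩
      refine le_of_tendsto_of_tendsto hti htf ?_
      filter_upwards [self_mem_nhdsWithin] with y hy
      exact le_of_lt (h1 y hy)
    have hle : f K ≤ K := by
      have htf : Tendsto f (nhdsWithin K (Ioi K)) (nhds (f K)) :=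
        hcK.tendsto.mono_left nhdsWithin_le_nhds
      have hti : Tendsto (fun y : ℝ => y) (nhdsWithin K (Ioi K)) (nhds K) :=
        tendsto_id.mono_left nhdsWithin_le_nhds
      refine le_of_tendsto_of_tendsto htf hti ?_
      filter_upwards [self_mem_nhdsWithin] with y hy
      exact le_of_lt (h2 y hy)
    linarith
  intro ω
  set a : ℕ → ℝ := x ω with hadef
  set A : ℕ → ℝ := fun n => α + l * ξ (n+1) ω with hAdef
  have hAb : ∀ n, β ≤ A n ∧ A n ≤ γ := by
    intro n
    obtain ⟨hξ1, hξ2⟩ := hξ (n+1) ω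
    constructor
    · simp only [hAdef, hβdef]; nlinarith
    · simp only [hAdef, hγdef]; nlinarith
  -- positivity and the step formula
  have key : ∀ n, 0 < a n ∧ a (n+1) = (1 - A n) * f (a n) + A n * a n := by
    have hpos : ∀ n, 0 < a n := by
      intro n
      induction n with
      | zero => exact hx0 ω
      | succ n ih =>
        have hfa : 0 ≤ f (a n) := hfpos (a n) (le_of_lt ih)
        have hv : 0 < (1 - A n) * f (a n) + A n * a n := by
          have h1' : 0 ≤ (1 - A n) * f (a n) :=
            mul_nonneg (by linarith [(hAb n).2]) hfa
          have h2' : 0 < A n * a n :=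
            mul_pos (lt_of_lt_of_le hβ0 (hAb n).1) ih
          linarith
        have : a (n+1) = max (f (a n) - A n * (f (a n) - a n)) 0 := hrec ω n
        rw [this]
        have heq : f (a n) - A n * (f (a n) - a n) = (1 - A n) * f (a n) + A n * a n := by ring
        rw [heq, max_eq_left (le_of_lt hv)]
        exact hv
    intro n
    refine ⟨hpos n, ?_⟩
    have hfa : 0 ≤ f (a n) := hfpos (a n) (le_of_lt (hpos n))
    have hv : 0 ≤ (1 - A n) * f (a n) + A n * a n := by
      have h1' : 0 ≤ (1 - A n) * f (a n) :=
        mul_nonneg (by linarith [(hAb n).2]) hfa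
      have h2' : 0 ≤ A n * a n :=
        mul_nonneg (le_of_lt (lt_of_lt_of_le hβ0 (hAb n).1)) (le_of_lt (hpos n))
      linarith
    have : a (n+1) = max (f (a n) - A n * (f (a n) - a n)) 0 := hrec ω n
    rw [this]
    have heq : f (a n) - A n * (f (a n) - a n) = (1 - A n) * f (a n) + A n * a n := by ring
    rw [heq, max_eq_left hv]
  have hpos : ∀ n, 0 < a n := fun n => (key n).1
  have hstep : ∀ n, a (n+1) = (1 - A n) * f (a n) + A n * a n := fun n => (key n).2
  -- lower bound c
  set c : ℝ := min (a 0) (β * K) with hcdef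
  have hc0 : 0 < c := lt_min (hpos 0) (mul_pos hβ0 hK)
  have hlb : ∀ n, c ≤ a n := by
    intro n
    induction n with
    | zero => exact min_le_left _ _
    | succ n ih =>
      rcases lt_or_ge (a n) K with h | h
      · -- below K : increasing
        have hfa : f (a n) > a n := h1 (a n) ⟨hpos n, h⟩
        have : a n ≤ a (n+1) := by
          rw [hstep n]
          nlinarith [mul_nonneg (by linarith [(hAb n).2] : (0:ℝ) ≤ 1 - A n) (by linarith : (0:ℝ) ≤ f (a n) - a n)]
        linarith
      · -- above or at K : a (n+1) ≥ β K
        have hfa : 0 ≤ f (a n) := hfpos (a n) (le_of_lt (hpos n))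
        have : β * K ≤ a (n+1) := by
          rw [hstep n]
          have h1' : 0 ≤ (1 - A n) * f (a n) :=
            mul_nonneg (by linarith [(hAb n).2]) hfa
          have h2' : β * K ≤ A n * a n := by
            apply mul_le_mul (hAb n).1 h (le_of_lt hK)
            linarith [(hAb n).1]
          linarith
        exact le_trans (min_le_right _ _) this
  set V : ℕ → ℝ := fun n => |a n - K| with hVdef
  have hV0 : ∀ n, 0 ≤ V n := fun n => abs_nonneg _
  -- crossing bound
  have hbound : ∀ n, (1 - A n) * |f (a n) - K| ≤ q * V n := by
    intro n
    have h1' : 1 - A n ≤ 1 - β := by linarith [(hAb n).1]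
    have h2' : |f (a n) - K| ≤ M * |a n - K| := hLip (a n) (le_of_lt (hpos n))
    calc (1 - A n) * |f (a n) - K| ≤ (1 - β) * (M * |a n - K|) := by
          apply mul_le_mul h1' h2' (abs_nonneg _) (by linarith)
      _ = q * V n := by simp only [hqdef, hVdef]; ring
  -- one-step monotonicity of V with contraction on crossings
  have hmono : ∀ n, V (n+1) ≤ V n := by
    intro n
    rcases lt_trichotomy (a n) K with h | h | h
    · have hfa : f (a n) > a n := h1 (a n) ⟨hpos n, h⟩
      have hinc : a n ≤ a (n+1) := by
        rw [hstep n]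
        have heq : (1 - A n) * f (a n) + A n * a n - a n = (1 - A n) * (f (a n) - a n) := by ring
        nlinarith [mul_nonneg (by linarith [(hAb n).2] : (0:ℝ) ≤ 1 - A n) (by linarith : (0:ℝ) ≤ f (a n) - a n)]
      rcases le_or_gt (a (n+1)) K with h' | h'
      · have e1 : V (n+1) = K - a (n+1) := by
          have h0 : a (n+1) - K ≤ 0 := by linarith
          simp only [hVdef]; rw [abs_of_nonpos h0]; ring
        have e2 : V n = K - a n := by
          have h0 : a n - K ≤ 0 := by linarith
          simp only [hVdef]; rw [abs_of_nonpos h0]; ring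
        rw [e1, e2]; linarith
      · have e1 : V (n+1) = a (n+1) - K := abs_of_nonneg (by linarith)
        have hx' : a (n+1) - K ≤ (1 - A n) * (f (a n) - K) := by
          rw [hstep n]
          have hz : A n * (a n - K) ≤ 0 :=
            mul_nonpos_of_nonneg_of_nonpos (by linarith [(hAb n).1]) (by linarith)
          have heq : (1 - A n) * f (a n) + A n * a n - K
              = (1 - A n) * (f (a n) - K) + A n * (a n - K) := by ring
          linarith
        have hfk : (1 - A n) * (f (a n) - K) ≤ (1 - A n) * |f (a n) - K| := by
          apply mul_le_mul_of_nonneg_left (le_abs_self _) (by linarith [(hAb n).2])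
        have hqv : V (n+1) ≤ q * V n := by
          rw [e1]; exact le_trans hx' (le_trans hfk (hbound n))
        calc V (n+1) ≤ q * V n := hqv
          _ ≤ 1 * V n := mul_le_mul_of_nonneg_right (le_of_lt hq1) (hV0 n)
          _ = V n := one_mul _
    · have : a (n+1) = K := by rw [hstep n, h, hfK]; ring
      simp only [hVdef, this, h, sub_self, abs_zero]; exact le_refl 0
    · have hfa : f (a n) < a n := h2 (a n) h
      have hdec : a (n+1) ≤ a n := by
        rw [hstep n]
        have heq : a n - ((1 - A n) * f (a n) + A n * a n) = (1 - A n) * (a n - f (a n)) := by ring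
        nlinarith [mul_nonneg (by linarith [(hAb n).2] : (0:ℝ) ≤ 1 - A n) (by linarith : (0:ℝ) ≤ a n - f (a n))]
      rcases le_or_gt K (a (n+1)) with h' | h'
      · have e1 : V (n+1) = a (n+1) - K := abs_of_nonneg (by linarith)
        have e2 : V n = a n - K := abs_of_nonneg (by linarith)
        rw [e1, e2]; linarith
      · have e1 : V (n+1) = K - a (n+1) := by
          have h0 : a (n+1) - K ≤ 0 := by linarith
          simp only [hVdef]; rw [abs_of_nonpos h0]; ring
        have hx' : K - a (n+1) ≤ (1 - A n) * (K - f (a n)) := by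
          rw [hstep n]
          have hz : 0 ≤ A n * (a n - K) :=
            mul_nonneg (by linarith [(hAb n).1]) (by linarith)
          have heq : K - ((1 - A n) * f (a n) + A n * a n)
              = (1 - A n) * (K - f (a n)) - A n * (a n - K) := by ring
          linarith
        have hfk : (1 - A n) * (K - f (a n)) ≤ (1 - A n) * |f (a n) - K| := by
          apply mul_le_mul_of_nonneg_left _ (by linarith [(hAb n).2])
          rw [abs_sub_comm]; exact le_abs_self _
        have hqv : V (n+1) ≤ q * V n := by
          rw [e1]; exact le_trans hx' (le_trans hfk (hbound n))
        calc V (n+1) ≤ q * V n := hqv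
          _ ≤ 1 * V n := mul_le_mul_of_nonneg_right (le_of_lt hq1) (hV0 n)
          _ = V n := one_mul _
  have hVanti : Antitone V := antitone_nat_of_succ_le hmono
  have hbdd : BddBelow (Set.range V) := ⟨0, fun y ⟨n, hn⟩ => hn ▸ hV0 n⟩
  set L : ℝ := ⨅ n, V n with hLdef
  have hVL : Tendsto V atTop (nhds L) := tendsto_atTop_ciInf hVanti hbdd
  have hL0 : 0 ≤ L := le_ciInf hV0
  have hLle : ∀ n, L ≤ V n := fun n => ciInf_le hbdd n
  have hLzero : L = 0 := by
    by_contra hLne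
    have hL : 0 < L := lt_of_le_of_ne hL0 (Ne.symm hLne)
    -- uniform progress below K
    have hε₁ : ∃ ε > 0, ∀ y ∈ Set.Icc c (K - L), ε ≤ f y - y := by
      by_cases hne : c ≤ K - L
      · have hcomp : IsCompact (Set.Icc c (K - L)) := isCompact_Icc
        have hsub : Set.Icc c (K - L) ⊆ Set.Ici (0:ℝ) := fun y hy => le_trans (le_of_lt hc0) hy.1
        have hcont : ContinuousOn (fun y => f y - y) (Set.Icc c (K - L)) :=
          (hfc.mono hsub).sub continuousOn_id
        obtain ⟨y0, hy0, hy0min⟩ := hcomp.exists_isMinOn ⟨c, le_refl c, hne⟩ hcont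
        have hy0pos : 0 < f y0 - y0 := by
          have : f y0 > y0 := h1 y0 ⟨lt_of_lt_of_le hc0 hy0.1, lt_of_le_of_lt hy0.2 (by linarith)⟩
          linarith
        exact ⟨f y0 - y0, hy0pos, fun y hy => hy0min hy⟩
      · exact ⟨1, one_pos, fun y hy => absurd (le_trans hy.1 hy.2) hne⟩
    -- uniform progress above K
    have hε₂ : ∃ ε > 0, ∀ y ∈ Set.Icc (K + L) (K + V 0), ε ≤ y - f y := by
      by_cases hne : K + L ≤ K + V 0
      · have hcomp : IsCompact (Set.Icc (K + L) (K + V 0)) := isCompact_Icc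
        have hsub : Set.Icc (K + L) (K + V 0) ⊆ Set.Ici (0:ℝ) := fun y hy =>
          le_trans (by linarith [le_of_lt hK, le_of_lt hL] : (0:ℝ) ≤ K + L) hy.1
        have hcont : ContinuousOn (fun y => y - f y) (Set.Icc (K + L) (K + V 0)) :=
          continuousOn_id.sub (hfc.mono hsub)
        obtain ⟨y0, hy0, hy0min⟩ := hcomp.exists_isMinOn ⟨K + L, le_refl _, hne⟩ hcont
        have hy0pos : 0 < y0 - f y0 := by
          have : f y0 < y0 := h2 y0 (by linarith [hy0.1])
          linarith
        exact ⟨y0 - f y0, hy0pos, fun y hy => hy0min hy⟩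
      · exact ⟨1, one_pos, fun y hy => absurd (le_trans hy.1 hy.2) hne⟩
    obtain ⟨ε₁, hε₁0, hε₁p⟩ := hε₁
    obtain ⟨ε₂, hε₂0, hε₂p⟩ := hε₂
    set δ : ℝ := min (min ((1 - γ) * ε₁) ((1 - γ) * ε₂)) ((1 - q) * L) with hδdef
    have hδ0 : 0 < δ :=
      lt_min (lt_min (mul_pos (by linarith) hε₁0) (mul_pos (by linarith) hε₂0))
        (mul_pos (by linarith) hL)
    have hdrop : ∀ n, V (n+1) ≤ V n - δ := by
      intro n
      have hVub : V n ≤ V 0 := hVanti (Nat.zero_le n)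
      rcases lt_trichotomy (a n) K with h | h | h
      · -- below K
        have e2 : V n = K - a n := by
          have h0 : a n - K ≤ 0 := by linarith
          simp only [hVdef]; rw [abs_of_nonpos h0]; ring
        have hmem : a n ∈ Set.Icc c (K - L) := ⟨hlb n, by linarith [hLle n]⟩
        have hfa : ε₁ ≤ f (a n) - a n := hε₁p (a n) hmem
        rcases le_or_gt (a (n+1)) K with h' | h'
        · have e1 : V (n+1) = K - a (n+1) := by
            have h0 : a (n+1) - K ≤ 0 := by linarith
            simp only [hVdef]; rw [abs_of_nonpos h0]; ring
          have hinc : (1 - γ) * ε₁ ≤ a (n+1) - a n := by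
            have heq : a (n+1) - a n = (1 - A n) * (f (a n) - a n) := by
              rw [hstep n]; ring
            rw [heq]
            apply mul_le_mul (by linarith [(hAb n).2]) hfa (le_of_lt hε₁0) (by linarith [(hAb n).2])
          have : δ ≤ (1 - γ) * ε₁ := le_trans (min_le_left _ _) (min_le_left _ _)
          rw [e1, e2]; linarith
        · have e1 : V (n+1) = a (n+1) - K := abs_of_nonneg (by linarith)
          have hx' : a (n+1) - K ≤ (1 - A n) * (f (a n) - K) := by
            rw [hstep n]
            have hz : A n * (a n - K) ≤ 0 :=
              mul_nonpos_of_nonneg_of_nonpos (by linarith [(hAb n).1]) (by linarith)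
            have heq : (1 - A n) * f (a n) + A n * a n - K
                = (1 - A n) * (f (a n) - K) + A n * (a n - K) := by ring
            linarith
          have hfk : (1 - A n) * (f (a n) - K) ≤ (1 - A n) * |f (a n) - K| :=
            mul_le_mul_of_nonneg_left (le_abs_self _) (by linarith [(hAb n).2])
          have hqv : V (n+1) ≤ q * V n := by
            rw [e1]; exact le_trans hx' (le_trans hfk (hbound n))
          have hδle : δ ≤ (1 - q) * L := min_le_right _ _
          have h3 : (1 - q) * L ≤ (1 - q) * V n :=
            mul_le_mul_of_nonneg_left (hLle n) (by linarith)
          have h4 : q * V n = V n - (1 - q) * V n := by ring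
          linarith
      · exfalso
        have : V n = 0 := by simp only [hVdef, h, sub_self, abs_zero]
        linarith [hLle n]
      · -- above K
        have e2 : V n = a n - K := abs_of_nonneg (by linarith)
        have hmem : a n ∈ Set.Icc (K + L) (K + V 0) :=
          ⟨by linarith [hLle n], by linarith⟩
        have hfa : ε₂ ≤ a n - f (a n) := hε₂p (a n) hmem
        rcases le_or_gt K (a (n+1)) with h' | h'
        · have e1 : V (n+1) = a (n+1) - K := abs_of_nonneg (by linarith)
          have hdec : (1 - γ) * ε₂ ≤ a n - a (n+1) := by
            have heq : a n - a (n+1) = (1 - A n) * (a n - f (a n)) := by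
              rw [hstep n]; ring
            rw [heq]
            apply mul_le_mul (by linarith [(hAb n).2]) hfa (le_of_lt hε₂0) (by linarith [(hAb n).2])
          have : δ ≤ (1 - γ) * ε₂ := le_trans (min_le_left _ _) (min_le_right _ _)
          rw [e1, e2]; linarith
        · have e1 : V (n+1) = K - a (n+1) := by
            have h0 : a (n+1) - K ≤ 0 := by linarith
            simp only [hVdef]; rw [abs_of_nonpos h0]; ring
          have hx' : K - a (n+1) ≤ (1 - A n) * (K - f (a n)) := by
            rw [hstep n]
            have hz : 0 ≤ A n * (a n - K) :=
              mul_nonneg (by linarith [(hAb n).1]) (by linarith)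
            have heq : K - ((1 - A n) * f (a n) + A n * a n)
                = (1 - A n) * (K - f (a n)) - A n * (a n - K) := by ring
            linarith
          have hfk : (1 - A n) * (K - f (a n)) ≤ (1 - A n) * |f (a n) - K| := by
            apply mul_le_mul_of_nonneg_left _ (by linarith [(hAb n).2])
            rw [abs_sub_comm]; exact le_abs_self _
          have hqv : V (n+1) ≤ q * V n := by
            rw [e1]; exact le_trans hx' (le_trans hfk (hbound n))
          have hδle : δ ≤ (1 - q) * L := min_le_right _ _
          have h3 : (1 - q) * L ≤ (1 - q) * V n :=
            mul_le_mul_of_nonneg_left (hLle n) (by linarith)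
          have h4 : q * V n = V n - (1 - q) * V n := by ring
          linarith
    have hlin : ∀ n : ℕ, V n ≤ V 0 - n * δ := by
      intro n
      induction n with
      | zero => simp
      | succ n ih =>
        have := hdrop n
        push_cast
        push_cast at ih
        linarith
    obtain ⟨n, hn⟩ := exists_nat_gt (V 0 / δ)
    have : V 0 < n * δ := by
      rw [div_lt_iff₀ hδ0] at hn
      linarith
    linarith [hV0 n, hlin n]
  -- conclude
  have hVzero : Tendsto V atTop (nhds 0) := hLzero ▸ hVL
  have hdist : Tendsto (fun n => dist (a n) K) atTop (nhds 0) := by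
    have heq : (fun n => dist (a n) K) = V := by
      funext n; simp only [hVdef, Real.dist_eq]
    rw [heq]; exact hVzero
  exact tendsto_iff_dist_tendsto_zero.mpr hdist
end

section
/- Let f satisfy the local condition |f(x)-K| ≤ M_ε|x-K| for x ∈ (K-ε, K+ε) with M_ε > 1, f continuous with f > x on (0,K), f < x on (K,∞). Let α ∈ (1 - 1/M_ε, 1), (ξ_n) take values in [-1, ν] (ν ≥ 1), and l < min{α - (1 - 1/M_ε), (1-α)/ν}. If for some j the solution of x_{n+1} = max{f(x_n) - (α + l ξ_{n+1})(f(x_n) - x_n), 0} satisfies x_j ∈ (K-ε, K+ε), then x_n ∈ (K-ε, K+ε) for all n ≥ j and x_n → K. -/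
private lemma step_bound (f : ℝ → ℝ) (K Mε ε q a : ℝ)
    (hε : 0 < ε) (hεK : ε < K)
    (h1 : ∀ y, y ∈ Set.Ioo 0 K → f y > y)
    (h2 : ∀ y, y > K → f y < y)
    (hLip : ∀ y ∈ Set.Ioo (K - ε) (K + ε), |f y - K| ≤ Mε * |y - K|)
    (ha0 : 0 < a) (haq : a ≤ q) (haM : (1-a)*Mε ≤ q) (ha1 : a < 1) (hq1 : q < 1)
    (y : ℝ) (hy : |y - K| < ε) :
    |f y - a * (f y - y) - K| ≤ max (q * |y - K|) (|y - K| - (1-q) * |f y - y|) := by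
  obtain ⟨hy1, hy2⟩ := abs_lt.mp hy
  have hyI : y ∈ Set.Ioo (K-ε) (K+ε) := ⟨by linarith, by linarith⟩
  have hLy := hLip y hyI
  rcases lt_trichotomy y K with hlt | heq | hgt
  · -- y < K
    have hfy : f y > y := h1 y ⟨by linarith, hlt⟩
    have habs : |y - K| = K - y := by rw [abs_of_neg (by linarith)]; ring
    rw [habs] at hLy ⊢
    rcases le_or_gt K (f y) with hfK | hfK
    · have habsf : |f y - K| = f y - K := abs_of_nonneg (by linarith)
      rw [habsf] at hLy
      refine le_trans ?_ (le_max_left _ _)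
      rw [abs_le]
      constructor
      · nlinarith [mul_nonneg (by linarith : (0:ℝ) ≤ 1 - a) (by linarith : (0:ℝ) ≤ f y - K),
          mul_nonneg (by linarith : (0:ℝ) ≤ q - a) (by linarith : (0:ℝ) ≤ K - y)]
      · nlinarith [mul_le_mul_of_nonneg_left hLy (by linarith : (0:ℝ) ≤ 1 - a),
          mul_le_mul_of_nonneg_right haM (by linarith : (0:ℝ) ≤ K - y),
          mul_nonneg ha0.le (by linarith : (0:ℝ) ≤ K - y)]
    · have habsf : |f y - K| = K - f y := by rw [abs_of_neg (by linarith)]; ring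
      rw [habsf] at hLy
      have habsg : |f y - y| = f y - y := abs_of_nonneg (by linarith)
      refine le_trans ?_ (le_max_right _ _)
      rw [habsg, abs_le]
      constructor
      · nlinarith [mul_nonneg (by linarith : (0:ℝ) ≤ q - a) (by linarith : (0:ℝ) ≤ f y - y)]
      · nlinarith [mul_nonneg (by linarith : (0:ℝ) ≤ 1 - a) (by linarith : (0:ℝ) ≤ K - f y),
          mul_nonneg ha0.le (by linarith : (0:ℝ) ≤ f y - y),
          mul_nonneg (by linarith : (0:ℝ) ≤ q) (by linarith : (0:ℝ) ≤ f y - y)]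
  · -- y = K
    subst heq
    have hfK : f y = y := by
      have h0 : |f y - y| ≤ 0 := by simpa using hLy
      have h1' := abs_nonneg (f y - y)
      have := abs_eq_zero.mp (le_antisymm h0 h1')
      linarith
    rw [hfK]
    simp
  · -- y > K
    have hfy : f y < y := h2 y hgt
    have habs : |y - K| = y - K := abs_of_nonneg (by linarith)
    rw [habs] at hLy ⊢
    rcases le_or_gt (f y) K with hfK | hfK
    · have habsf : |f y - K| = K - f y := by
        rcases eq_or_lt_of_le hfK with h | h
        · rw [h]; simp
        · rw [abs_of_neg (by linarith)]; ring
      rw [habsf] at hLy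
      refine le_trans ?_ (le_max_left _ _)
      rw [abs_le]
      constructor
      · nlinarith [mul_le_mul_of_nonneg_left hLy (by linarith : (0:ℝ) ≤ 1 - a),
          mul_le_mul_of_nonneg_right haM (by linarith : (0:ℝ) ≤ y - K),
          mul_nonneg ha0.le (by linarith : (0:ℝ) ≤ y - K)]
      · nlinarith [mul_nonneg (by linarith : (0:ℝ) ≤ 1 - a) (by linarith : (0:ℝ) ≤ K - f y),
          mul_nonneg (by linarith : (0:ℝ) ≤ q - a) (by linarith : (0:ℝ) ≤ y - K)]
    · have habsf : |f y - K| = f y - K := abs_of_nonneg (by linarith)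
      rw [habsf] at hLy
      have habsg : |f y - y| = y - f y := by rw [abs_of_neg (by linarith)]; ring
      refine le_trans ?_ (le_max_right _ _)
      rw [habsg, abs_le]
      constructor
      · nlinarith [mul_nonneg (by linarith : (0:ℝ) ≤ 1 - a) (by linarith : (0:ℝ) ≤ f y - K),
          mul_nonneg ha0.le (by linarith : (0:ℝ) ≤ y - f y),
          mul_nonneg (by linarith : (0:ℝ) ≤ q) (by linarith : (0:ℝ) ≤ y - f y)]
      · nlinarith [mul_nonneg (by linarith : (0:ℝ) ≤ q - a) (by linarith : (0:ℝ) ≤ y - f y)]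

set_option maxHeartbeats 1000000 in
theorem stmt13 (f : ℝ → ℝ) (K Mε α l ε ν : ℝ) (ξ : ℕ → ℝ) (x : ℕ → ℝ) (j : ℕ)
    (hK : 0 < K) (hMε : 1 < Mε) (hε : 0 < ε) (hεK : ε < K) (hν : 1 ≤ ν)
    (hfc : ContinuousOn f (Set.Ici 0))
    (hfpos : ∀ y ∈ Set.Ici (0:ℝ), f y ∈ Set.Ici (0:ℝ))
    (h1 : ∀ y, y ∈ Set.Ioo 0 K → f y > y)
    (h2 : ∀ y, y > K → f y < y)
    (hLip : ∀ y ∈ Set.Ioo (K - ε) (K + ε), |f y - K| ≤ Mε * |y - K|)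
    (hα : α ∈ Set.Ioo (1 - 1/Mε) 1)
    (hl : 0 < l) (hl' : l < min (α - (1 - 1/Mε)) ((1 - α)/ν))
    (hξ : ∀ n, ξ n ∈ Set.Icc (-1 : ℝ) ν)
    (hx0 : x 0 > 0)
    (hrec : ∀ n, x (n+1) = max (f (x n) - (α + l * ξ (n+1)) * (f (x n) - x n)) 0)
    (hj : x j ∈ Set.Ioo (K - ε) (K + ε)) :
    (∀ n ≥ j, x n ∈ Set.Ioo (K - ε) (K + ε)) ∧
    Filter.Tendsto x Filter.atTop (nhds K) := by
  obtain ⟨hα1, hα2⟩ := hα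
  have hMε0 : 0 < Mε := lt_trans one_pos hMε
  have hν0 : 0 < ν := lt_of_lt_of_le one_pos hν
  have hMinv : 1/Mε < 1 := by rw [div_lt_one hMε0]; exact hMε
  have hlν : l * ν < 1 - α :=
    (lt_div_iff₀ hν0).mp (lt_of_lt_of_le hl' (min_le_right _ _))
  have hαl : 1 - 1/Mε < α - l := by
    have := lt_of_lt_of_le hl' (min_le_left _ _); linarith
  set q := max (α + l*ν) ((1 - α + l)*Mε) with hqdef
  have hq1 : q < 1 := by
    apply max_lt
    · linarith
    · have h' : (1 - α + l) * Mε < (1/Mε) * Mε := by nlinarith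
      have : (1/Mε) * Mε = 1 := by field_simp
      linarith
  have habound : ∀ n : ℕ, 0 < α + l * ξ (n+1) ∧ α + l * ξ (n+1) ≤ q ∧
      (1 - (α + l * ξ (n+1)))*Mε ≤ q ∧ α + l * ξ (n+1) < 1 := by
    intro n
    obtain ⟨hξ1, hξ2⟩ := hξ (n+1)
    have hge : α - l ≤ α + l * ξ (n+1) := by nlinarith
    have hle : α + l * ξ (n+1) ≤ α + l * ν := by nlinarith
    refine ⟨by linarith, le_trans hle (le_max_left _ _), ?_, by linarith⟩
    calc (1 - (α + l * ξ (n+1)))*Mε ≤ (1 - α + l)*Mε := by nlinarith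
    _ ≤ q := le_max_right _ _
  have onestep : ∀ n, x n ∈ Set.Ioo (K-ε) (K+ε) →
      x (n+1) ∈ Set.Ioo (K-ε) (K+ε) ∧
      |x (n+1) - K| ≤ max (q*|x n - K|) (|x n - K| - (1-q)*|f (x n) - x n|) := by
    intro n hx
    obtain ⟨h0, hq', hM', h1'⟩ := habound n
    obtain ⟨hxa, hxb⟩ := hx
    have hy : |x n - K| < ε := abs_lt.mpr ⟨by linarith, by linarith⟩
    have hb := step_bound f K Mε ε q _ hε hεK h1 h2 hLip h0 hq' hM' h1' hq1 (x n) hy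
    have hmaxle : max (q*|x n - K|) (|x n - K| - (1-q)*|f (x n) - x n|) ≤ |x n - K| :=
      max_le (mul_le_of_le_one_left (abs_nonneg _) hq1.le)
        (sub_le_self _ (mul_nonneg (by linarith) (abs_nonneg _)))
    have hlt : |f (x n) - (α + l * ξ (n+1)) * (f (x n) - x n) - K| < ε :=
      lt_of_le_of_lt (le_trans hb hmaxle) hy
    obtain ⟨hu1, hu2⟩ := abs_lt.mp hlt
    have hupos : 0 ≤ f (x n) - (α + l * ξ (n+1)) * (f (x n) - x n) := by linarith
    have hrw : x (n+1) = f (x n) - (α + l * ξ (n+1)) * (f (x n) - x n) := by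
      rw [hrec n]; exact max_eq_left hupos
    rw [hrw]
    exact ⟨⟨by linarith, by linarith⟩, hb⟩
  have inv : ∀ n ≥ j, x n ∈ Set.Ioo (K-ε) (K+ε) := by
    intro n hn
    induction n, hn using Nat.le_induction with
    | base => exact hj
    | succ n hn ih => exact (onestep n ih).1
  refine ⟨inv, ?_⟩
  rw [Metric.tendsto_atTop]
  intro δ0 hδ0
  set δ := min δ0 ε with hδdef
  have hδ : 0 < δ := lt_min hδ0 hε
  have hδε : δ ≤ ε := min_le_right _ _
  set S : Set ℝ := Set.Icc (K-ε) (K-δ) ∪ Set.Icc (K+δ) (K+ε) with hSdef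
  have hScompact : IsCompact S := isCompact_Icc.union isCompact_Icc
  have hSsub : S ⊆ Set.Ici (0:ℝ) := by
    rintro y (⟨hy1, hy2⟩ | ⟨hy1, hy2⟩) <;> simp only [Set.mem_Ici] <;> linarith
  have hgcont : ContinuousOn (fun y => |f y - y|) S :=
    ((hfc.mono hSsub).sub continuousOn_id).abs
  have hSne : S.Nonempty := ⟨K - ε, Or.inl ⟨le_refl _, by linarith⟩⟩
  obtain ⟨y0, hy0S, hy0min⟩ := hScompact.exists_isMinOn hSne hgcont
  have hc : 0 < |f y0 - y0| := by
    rcases hy0S with ⟨hy1, hy2⟩ | ⟨hy1, hy2⟩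
    · have := h1 y0 ⟨by linarith, by linarith⟩
      exact abs_pos.mpr (by linarith)
    · have := h2 y0 (by linarith)
      exact abs_pos.mpr (by linarith)
  set c := |f y0 - y0| with hcdef
  set η := min ((1-q)*δ) ((1-q)*c) with hηdef
  have hη : 0 < η := lt_min (mul_pos (by linarith) hδ) (mul_pos (by linarith) hc)
  have monot : ∀ n ≥ j, |x (n+1) - K| ≤ |x n - K| := by
    intro n hn
    exact le_trans (onestep n (inv n hn)).2
      (max_le (mul_le_of_le_one_left (abs_nonneg _) hq1.le)
        (sub_le_self _ (mul_nonneg (by linarith) (abs_nonneg _))))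
  have decr : ∀ n ≥ j, δ ≤ |x n - K| → |x (n+1) - K| ≤ |x n - K| - η := by
    intro n hn hd
    have hx := inv n hn
    have hb := (onestep n hx).2
    have hxS : x n ∈ S := by
      obtain ⟨hxa, hxb⟩ := hx
      rcases le_abs'.mp hd with h | h
      · exact Or.inl ⟨by linarith, by linarith⟩
      · exact Or.inr ⟨by linarith, by linarith⟩
    have hgc : c ≤ |f (x n) - x n| := isMinOn_iff.mp hy0min (x n) hxS
    refine le_trans hb (max_le ?_ ?_)
    · have hη1 : η ≤ (1-q)*δ := min_le_left _ _
      nlinarith [mul_nonneg (by linarith : (0:ℝ) ≤ 1-q) (by linarith [hd] : (0:ℝ) ≤ |x n - K| - δ)]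
    · have hη2 : η ≤ (1-q)*c := min_le_right _ _
      nlinarith [mul_le_mul_of_nonneg_left hgc (by linarith : (0:ℝ) ≤ 1-q)]
  have hdrop : ∃ N, j ≤ N ∧ |x N - K| < δ := by
    by_contra hcon
    push_neg at hcon
    have hiter : ∀ m : ℕ, |x (j+m) - K| ≤ |x j - K| - m * η := by
      intro m
      induction m with
      | zero => simp
      | succ m ih =>
        have hstep := decr (j+m) (Nat.le_add_right _ _) (hcon (j+m) (Nat.le_add_right _ _))
        have : j + (m+1) = (j+m) + 1 := rfl
        rw [this]
        push_cast
        push_cast at ih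
        linarith
    obtain ⟨m, hm⟩ := exists_nat_gt (|x j - K| / η)
    have hm' : |x j - K| < m * η := by
      rw [div_lt_iff₀ hη] at hm
      linarith
    have h1' := hiter m
    have h2' := abs_nonneg (x (j+m) - K)
    linarith
  obtain ⟨N, hNj, hN⟩ := hdrop
  refine ⟨N, ?_⟩
  have hstay : ∀ n, N ≤ n → |x n - K| < δ := by
    intro n hn
    induction n, hn using Nat.le_induction with
    | base => exact hN
    | succ n hn ih =>
      exact lt_of_le_of_lt (monot n (le_trans hNj hn)) ih
  intro n hn
  rw [Real.dist_eq]
  exact lt_of_lt_of_le (hstay n hn) (min_le_left _ _)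
end
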